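/- There exists a one-way deterministic pointer pushdown automaton over the alphabet {a, b, c} that recognizes exactly the language {aⁿbⁿcⁿ | n ≥ 1}. -/

import Mathlib

/-! ### Deterministic pointer pushdown automata -/

/-- Tape symbols: the input letters plus the end markers `▷` and `◁`. -/
inductive TSym (A : Type) : Type where
  | lmark : TSym A
  | rmark : TSym A
  | sym : A → TSym A

/-- The symbol in cell `j` of the tape `▷w◁` (cell `0` holds `▷`, cell `|w|+1` holds `◁`). -/
def tapeNth {A : Type} (w : List A) (j : ℕ) : TSym A :=
  if j = 0 then .lmark
  else
    match w[j - 1]? with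
    | some a => .sym a
    | none => .rmark

/-- Head directions: move left, stay, return to the stored pointer, move right. -/
inductive Dir : Type where
  | left | down | up | right
deriving DecidableEq

/-- A (two-way) deterministic pointer pushdown automaton.  A transition
`trans q a Z = some (p, β, d)` pops `(Z, i)` when `β = []` (moving the head by `d`,
where `d = up` returns the head to the position `i` stored with `Z`), and pushes `β`
above `Z` when `β ≠ []` (moving the head by `d`).  Moves `↑` must pop (`α = ε`),
moving left off `▷` and right off `◁` is forbidden. -/
structure DPPDA (Q A Γ : Type) : Type where
  trans : Q → TSym A → Γ → Option (Q × List Γ × Dir)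
  init : Q
  Z0 : Γ
  final : Q → Bool
  up_pop : ∀ q a Z p β, trans q a Z = some (p, β, Dir.up) → β = []
  no_left_lmark : ∀ q Z p β, trans q TSym.lmark Z ≠ some (p, β, Dir.left)
  no_right_rmark : ∀ q Z p β, trans q TSym.rmark Z ≠ some (p, β, Dir.right)

/-- A configuration: state, stack of symbols tagged with the head position at which
they were pushed (top of the stack is the head of the list), and head position. -/
structure Conf (Q Γ : Type) : Type where
  state : Q
  stack : List (Γ × ℕ)
  pos : ℕ

/-- One move of a DPPDA on input `w` (`none` when no move is possible). -/
def DPPDA.step {Q A Γ : Type} (M : DPPDA Q A Γ) (w : List A) (c : Conf Q Γ) :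
    Option (Conf Q Γ) :=
  match c.stack with
  | [] => none
  | (Z, i) :: rest =>
    match M.trans c.state (tapeNth w c.pos) Z with
    | none => none
    | some (p, β, d) =>
      let j' : ℕ :=
        match d with
        | Dir.left => c.pos - 1
        | Dir.down => c.pos
        | Dir.up => i
        | Dir.right => c.pos + 1
      match β with
      | [] => some ⟨p, rest, j'⟩
      | X :: Xs => some ⟨p, ((X :: Xs).map fun Y => (Y, j')) ++ (Z, i) :: rest, j'⟩

/-- Reachability between configurations. -/
def DPPDA.Reaches {Q A Γ : Type} (M : DPPDA Q A Γ) (w : List A) :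
    Conf Q Γ → Conf Q Γ → Prop :=
  Relation.ReflTransGen (fun c c' => M.step w c = some c')

/-- Acceptance: from the initial configuration `(q₀, (Z₀, 0), 0)` the automaton
reaches the right end marker with empty stack in a final state. -/
def DPPDA.Accepts {Q A Γ : Type} (M : DPPDA Q A Γ) (w : List A) : Prop :=
  ∃ qf : Q, M.final qf = true ∧
    M.Reaches w ⟨M.init, [(M.Z0, 0)], 0⟩ ⟨qf, [], w.length + 1⟩

/-- A one-way DPPDA: moves with direction `←` are forbidden. -/
def DPPDA.OneWay {Q A Γ : Type} (M : DPPDA Q A Γ) : Prop :=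
  ∀ q a Z p β, M.trans q a Z ≠ some (p, β, Dir.left)


/-
The automaton makes two passes over `▷w◁`. In the first it pushes a tally for every `a` on top
of a mark tagged with cell 1, pops a tally for every `b`, and on the first `c` pops the mark
with `↑`, which sends the head back to the first `a`. In the second pass it again pushes a tally
for every `a`, crosses the `b`s by pushing and at once popping a pad symbol (every move has to
push or pop), pops a tally for every `c`, and accepts on `◁` when only the bottom symbol is left.

Every configuration reachable on an arbitrary word `w` is of one of the shapes listed in `Inv`,
and the only shape with empty stack forces `w = aⁿbⁿcⁿ` with `n ≥ 1`. Conversely, on `aⁿbⁿcⁿ`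
the accepting run is assembled from push, pop and skip loops over the three blocks.
-/

namespace AnBnCn

open TSym List

inductive State : Type where
  | start | countA | matchB | recount | skip | matchC | accept
deriving DecidableEq

inductive Sym : Type where
  | bottom | mark | tally | pad
deriving DecidableEq

instance : Fintype State :=
  Fintype.ofList [.start, .countA, .matchB, .recount, .skip, .matchC, .accept]
    (by intro q; cases q <;> simp)

instance : Fintype Sym :=
  Fintype.ofList [.bottom, .mark, .tally, .pad] (by intro Z; cases Z <;> simp)

def trans : State → TSym (Fin 3) → Sym → Option (State × List Sym × Dir)
  | .start, lmark, .bottom => some (.countA, [.mark], .right)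
  | .countA, sym 0, _ => some (.countA, [.tally], .right)
  | .countA, sym 1, .tally => some (.matchB, [], .right)
  | .matchB, sym 1, .tally => some (.matchB, [], .right)
  | .matchB, sym 2, .mark => some (.recount, [], .up)
  | .recount, sym 0, _ => some (.recount, [.tally], .right)
  | .recount, sym 1, _ => some (.skip, [.pad], .right)
  | .skip, _, .pad => some (.recount, [], .down)
  | .recount, sym 2, .tally => some (.matchC, [], .right)
  | .matchC, sym 2, .tally => some (.matchC, [], .right)
  | .matchC, rmark, .bottom => some (.accept, [], .down)
  | _, _, _ => none

theorem trans_ne_left (q : State) (a : TSym (Fin 3)) (Z : Sym) (p : State) (β : List Sym) :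
    trans q a Z ≠ some (p, β, .left) := by
  cases q <;> cases Z <;> rcases a with _ | _ | a <;> try fin_cases a
  all_goals simp [trans]

def dppda : DPPDA State (Fin 3) Sym where
  trans := trans
  init := .start
  Z0 := .bottom
  final q := q = .accept
  up_pop q a Z p β h := by
    cases q <;> cases Z <;> rcases a with _ | _ | a <;> try fin_cases a
    all_goals simp_all [trans]
  no_left_lmark q Z p β := trans_ne_left q lmark Z p β
  no_right_rmark q Z p β := by cases q <;> cases Z <;> simp [trans]

theorem dppda_oneWay : dppda.OneWay := trans_ne_left

/-- The tallies pushed while reading cells `1, …, k`; each is tagged with the cell after the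
one read. -/
def tallies : ℕ → List (Sym × ℕ)
  | 0 => []
  | k + 1 => (.tally, k + 2) :: tallies k

theorem tapeNth_succ_of_getElem? {A : Type} {w : List A} {j : ℕ} {x : A} (h : w[j]? = some x) :
    tapeNth w (j + 1) = sym x := by
  simp [tapeNth, h]

theorem tapeNth_succ_of_getElem?_eq_none {A : Type} {w : List A} {j : ℕ} (h : w[j]? = none) :
    tapeNth w (j + 1) = rmark := by
  simp [tapeNth, h]

theorem fin_three_cases (x : Fin 3) : x = 0 ∨ x = 1 ∨ x = 2 := by
  fin_cases x <;> simp

section Steps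

variable {w : List (Fin 3)}

theorem step_start : dppda.step w ⟨.start, [(.bottom, 0)], 0⟩ =
    some ⟨.countA, [(.mark, 1), (.bottom, 0)], 1⟩ := by
  simp [DPPDA.step, dppda, trans, tapeNth]

theorem step_push {q : State} (hq : q = .countA ∨ q = .recount) {j : ℕ}
    (ha : tapeNth w j = sym 0) {T : List (Sym × ℕ)} (hT : T ≠ []) :
    dppda.step w ⟨q, T, j⟩ = some ⟨q, (.tally, j + 1) :: T, j + 1⟩ := by
  obtain ⟨⟨Z, i⟩, S, rfl⟩ := exists_cons_of_ne_nil hT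
  rcases hq with rfl | rfl <;> cases Z <;> simp [DPPDA.step, dppda, trans, ha]

theorem step_pop {q q' : State} {s : Fin 3} (hq : trans q (sym s) .tally = some (q', [], .right))
    {j m : ℕ} (ha : tapeNth w j = sym s) (S : List (Sym × ℕ)) :
    dppda.step w ⟨q, tallies (m + 1) ++ S, j⟩ = some ⟨q', tallies m ++ S, j + 1⟩ := by
  simp [DPPDA.step, dppda, ha, hq, tallies]

theorem step_return {j : ℕ} (ha : tapeNth w j = sym 2) :
    dppda.step w ⟨.matchB, [(.mark, 1), (.bottom, 0)], j⟩ =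
      some ⟨.recount, [(.bottom, 0)], 1⟩ := by
  simp [DPPDA.step, dppda, trans, ha]

theorem step_skip {j : ℕ} (ha : tapeNth w j = sym 1) {T : List (Sym × ℕ)} (hT : T ≠ []) :
    dppda.step w ⟨.recount, T, j⟩ = some ⟨.skip, (.pad, j + 1) :: T, j + 1⟩ := by
  obtain ⟨⟨Z, i⟩, S, rfl⟩ := exists_cons_of_ne_nil hT
  cases Z <;> simp [DPPDA.step, dppda, trans, ha]

theorem step_unpad {j i : ℕ} (S : List (Sym × ℕ)) :
    dppda.step w ⟨.skip, (.pad, i) :: S, j⟩ = some ⟨.recount, S, j⟩ := by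
  rcases h : tapeNth w j with _ | _ | x <;> try obtain rfl | rfl | rfl := fin_three_cases x
  all_goals simp [DPPDA.step, dppda, trans, h]

theorem step_accept {j : ℕ} (ha : tapeNth w j = rmark) :
    dppda.step w ⟨.matchC, [(.bottom, 0)], j⟩ = some ⟨.accept, [], j⟩ := by
  simp [DPPDA.step, dppda, trans, ha]

end Steps

inductive Inv (w : List (Fin 3)) : Conf State Sym → Prop
  | start : Inv w ⟨.start, [(.bottom, 0)], 0⟩
  | countA (k : ℕ) (v : List (Fin 3)) : w = replicate k 0 ++ v →
      Inv w ⟨.countA, tallies k ++ [(.mark, 1), (.bottom, 0)], k + 1⟩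
  | matchB (m k : ℕ) (v : List (Fin 3)) : 0 < k →
      w = replicate (m + k) 0 ++ replicate k 1 ++ v →
      Inv w ⟨.matchB, tallies m ++ [(.mark, 1), (.bottom, 0)], m + 2 * k + 1⟩
  | recount (p j : ℕ) (v : List (Fin 3)) : 0 < p → j ≤ 2 * p →
      w = replicate p 0 ++ replicate p 1 ++ 2 :: v →
      Inv w ⟨.recount, tallies (min j p) ++ [(.bottom, 0)], j + 1⟩
  | skip (p j : ℕ) (v : List (Fin 3)) : 0 < p → p < j → j ≤ 2 * p →
      w = replicate p 0 ++ replicate p 1 ++ 2 :: v →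
      Inv w ⟨.skip, (.pad, j + 1) :: (tallies p ++ [(.bottom, 0)]), j + 1⟩
  | matchC (m k : ℕ) (v : List (Fin 3)) : 0 < k →
      w = replicate (m + k) 0 ++ replicate (m + k) 1 ++ replicate k 2 ++ v →
      Inv w ⟨.matchC, tallies m ++ [(.bottom, 0)], 2 * (m + k) + k + 1⟩
  | accept (n j : ℕ) : 1 ≤ n → w = replicate n 0 ++ replicate n 1 ++ replicate n 2 →
      Inv w ⟨.accept, [], j⟩

namespace Inv

variable {w v : List (Fin 3)} {c c' : Conf State Sym}

theorem step_countA {k : ℕ} (hw : w = replicate k 0 ++ v)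
    (h : dppda.step w ⟨.countA, tallies k ++ [(.mark, 1), (.bottom, 0)], k + 1⟩ = some c') :
    Inv w c' := by
  rcases v with _ | ⟨x, v⟩
  · have hx : tapeNth w (k + 1) = rmark := tapeNth_succ_of_getElem?_eq_none (by grind)
    cases k <;> simp_all [DPPDA.step, dppda, trans, tallies]
  have hx : tapeNth w (k + 1) = sym x := tapeNth_succ_of_getElem? (by grind)
  obtain rfl | rfl | rfl := fin_three_cases x
  · rw [step_push (.inl rfl) hx (by simp)] at h; cases h
    exact .countA (k + 1) v (by grind [replicate_succ'])
  · rcases k with _ | m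
    · simp_all [DPPDA.step, dppda, trans, tallies]
    rw [step_pop rfl hx] at h; cases h
    exact .matchB m 1 v one_pos (by grind [replicate_succ'])
  · cases k <;> simp_all [DPPDA.step, dppda, trans, tallies]

theorem step_matchB {m k : ℕ} (hk : 0 < k) (hw : w = replicate (m + k) 0 ++ replicate k 1 ++ v)
    (h : dppda.step w ⟨.matchB, tallies m ++ [(.mark, 1), (.bottom, 0)], m + 2 * k + 1⟩ =
      some c') :
    Inv w c' := by
  rcases v with _ | ⟨x, v⟩
  · have hx : tapeNth w (m + 2 * k + 1) = rmark := tapeNth_succ_of_getElem?_eq_none (by grind)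
    cases m <;> simp_all [DPPDA.step, dppda, trans, tallies]
  have hx : tapeNth w (m + 2 * k + 1) = sym x := tapeNth_succ_of_getElem? (by grind)
  obtain rfl | rfl | rfl := fin_three_cases x
  · cases m <;> simp_all [DPPDA.step, dppda, trans, tallies]
  · rcases m with _ | m
    · simp_all [DPPDA.step, dppda, trans, tallies]
    rw [step_pop rfl hx] at h; cases h
    convert Inv.matchB (w := w) m (k + 1) v k.succ_pos (by grind [replicate_succ']) using 2
    omega
  · rcases m with _ | m
    · rw [tallies, nil_append, step_return hx] at h; cases h
      exact .recount k 0 v hk (by omega) (by grind)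
    simp_all [DPPDA.step, dppda, trans, tallies]

theorem step_recount {p j : ℕ} (hp : 0 < p) (hj : j ≤ 2 * p)
    (hw : w = replicate p 0 ++ replicate p 1 ++ 2 :: v)
    (h : dppda.step w ⟨.recount, tallies (min j p) ++ [(.bottom, 0)], j + 1⟩ = some c') :
    Inv w c' := by
  obtain hjp | hjp | rfl : j < p ∨ p ≤ j ∧ j < 2 * p ∨ j = 2 * p := by omega
  · have hx : tapeNth w (j + 1) = sym 0 := tapeNth_succ_of_getElem? (by grind)
    rw [show min j p = j by omega, step_push (.inr rfl) hx (by simp)] at h; cases h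
    have := Inv.recount p (j + 1) v hp (by omega) hw
    rwa [show min (j + 1) p = j + 1 by omega] at this
  · have hx : tapeNth w (j + 1) = sym 1 := tapeNth_succ_of_getElem? (by grind)
    rw [step_skip hx (by simp)] at h; cases h
    have := Inv.skip p (j + 1) v hp (by omega) (by omega) hw
    rwa [show min j p = p by omega]
  · have hx : tapeNth w (2 * p + 1) = sym 2 := tapeNth_succ_of_getElem? (by grind)
    obtain ⟨m, rfl⟩ : ∃ m, p = m + 1 := ⟨p - 1, by omega⟩
    rw [show min (2 * (m + 1)) (m + 1) = m + 1 by omega, step_pop rfl hx] at h; cases h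
    exact .matchC m 1 v one_pos (by grind)

theorem step_matchC {m k : ℕ} (hk : 0 < k)
    (hw : w = replicate (m + k) 0 ++ replicate (m + k) 1 ++ replicate k 2 ++ v)
    (h : dppda.step w ⟨.matchC, tallies m ++ [(.bottom, 0)], 2 * (m + k) + k + 1⟩ = some c') :
    Inv w c' := by
  rcases v with _ | ⟨x, v⟩
  · have hx : tapeNth w (2 * (m + k) + k + 1) = rmark :=
      tapeNth_succ_of_getElem?_eq_none (by grind)
    rcases m with _ | m
    · rw [tallies, nil_append, step_accept hx] at h; cases h
      exact .accept k _ hk (by grind)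
    simp_all [DPPDA.step, dppda, trans, tallies]
  have hx : tapeNth w (2 * (m + k) + k + 1) = sym x := tapeNth_succ_of_getElem? (by grind)
  obtain rfl | rfl | rfl := fin_three_cases x
  · cases m <;> simp_all [DPPDA.step, dppda, trans, tallies]
  · cases m <;> simp_all [DPPDA.step, dppda, trans, tallies]
  · rcases m with _ | m
    · simp_all [DPPDA.step, dppda, trans, tallies]
    rw [step_pop rfl hx] at h; cases h
    convert Inv.matchC (w := w) m (k + 1) v k.succ_pos (by grind [replicate_succ']) using 2
    omega

theorem step (hc : Inv w c) (h : dppda.step w c = some c') : Inv w c' := by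
  cases hc with
  | start =>
    rw [step_start] at h; cases h
    exact .countA 0 w rfl
  | countA k v hw => exact step_countA hw h
  | matchB m k v hk hw => exact step_matchB hk hw h
  | recount p j v hp hj hw => exact step_recount hp hj hw h
  | skip p j v hp hj hj' hw =>
    rw [step_unpad] at h; cases h
    have := Inv.recount p j v hp hj' hw
    rwa [show min j p = p by omega] at this
  | matchC m k v hk hw => exact step_matchC hk hw h
  | accept => simp [DPPDA.step] at h

theorem of_reaches (h : dppda.Reaches w c c') (hc : Inv w c) : Inv w c' := by
  induction h with
  | refl => exact hc
  | tail _ hstep ih => exact ih.step hstep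

theorem exists_eq_of_stack_eq_nil (hc : Inv w c) (hs : c.stack = []) :
    ∃ n, 1 ≤ n ∧ w = replicate n 0 ++ replicate n 1 ++ replicate n 2 := by
  cases hc with
  | accept n _ hn hw => exact ⟨n, hn, hw⟩
  | _ => simp at hs

end Inv

theorem exists_eq_of_accepts {w : List (Fin 3)} (h : dppda.Accepts w) :
    ∃ n, 1 ≤ n ∧ w = replicate n 0 ++ replicate n 1 ++ replicate n 2 := by
  obtain ⟨_, _, hr⟩ := h
  exact (Inv.start.of_reaches hr).exists_eq_of_stack_eq_nil rfl

section Loops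

variable {w : List (Fin 3)}

theorem reaches_push {q : State} (hq : q = .countA ∨ q = .recount) {n : ℕ}
    (h : ∀ i < n, tapeNth w (i + 1) = sym 0) {S : List (Sym × ℕ)} (hS : S ≠ []) :
    dppda.Reaches w ⟨q, S, 1⟩ ⟨q, tallies n ++ S, n + 1⟩ := by
  induction n with
  | zero => exact .refl
  | succ n ih =>
    exact (ih fun i hi => h i (by omega)).tail
      (step_push hq (h n n.lt_succ_self) (by simp [hS]))

theorem reaches_pop {q : State} {s : Fin 3} (hq : trans q (sym s) .tally = some (q, [], .right))
    {j k : ℕ} (h : ∀ i < k, tapeNth w (j + i) = sym s) (S : List (Sym × ℕ)) :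
    dppda.Reaches w ⟨q, tallies k ++ S, j⟩ ⟨q, S, j + k⟩ := by
  induction k generalizing j with
  | zero => exact .refl
  | succ k ih =>
    refine .head (step_pop hq (h 0 k.succ_pos) S) ?_
    rw [show j + (k + 1) = j + 1 + k by omega]
    exact ih fun i hi => by rw [Nat.add_right_comm]; exact h (i + 1) (by omega)

theorem reaches_skip {j k : ℕ} (h : ∀ i < k, tapeNth w (j + i) = sym 1) {T : List (Sym × ℕ)}
    (hT : T ≠ []) : dppda.Reaches w ⟨.recount, T, j⟩ ⟨.recount, T, j + k⟩ := by
  induction k generalizing j with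
  | zero => exact .refl
  | succ k ih =>
    refine .head (step_skip (h 0 k.succ_pos) hT) (.head (step_unpad T) ?_)
    rw [show j + (k + 1) = j + 1 + k by omega]
    exact ih fun i hi => by rw [Nat.add_right_comm]; exact h (i + 1) (by omega)

end Loops

theorem accepts_replicate (m : ℕ) :
    dppda.Accepts (replicate (m + 1) 0 ++ replicate (m + 1) 1 ++ replicate (m + 1) 2) := by
  set n := m + 1
  set w : List (Fin 3) := replicate n 0 ++ replicate n 1 ++ replicate n 2
  have cell : ∀ j x, 0 < j → w[j - 1]? = some x → tapeNth w j = sym x := by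
    rintro (_ | j) x hj hx
    exacts [absurd hj (lt_irrefl 0), tapeNth_succ_of_getElem? hx]
  have hA : ∀ j, 0 < j → j ≤ n → tapeNth w j = sym 0 :=
    fun j h₁ h₂ => cell j 0 h₁ (by grind)
  have hB : ∀ j, n < j → j ≤ 2 * n → tapeNth w j = sym 1 :=
    fun j h₁ h₂ => cell j 1 (by omega) (by grind)
  have hC : ∀ j, 2 * n < j → j ≤ 3 * n → tapeNth w j = sym 2 :=
    fun j h₁ h₂ => cell j 2 (by omega) (by grind)
  have hEnd : tapeNth w (3 * n + 1) = rmark := tapeNth_succ_of_getElem?_eq_none (by grind)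
  have firstPass :
      dppda.Reaches w ⟨.start, [(.bottom, 0)], 0⟩ ⟨.recount, [(.bottom, 0)], 1⟩ :=
    .head step_start <|
      (reaches_push (.inl rfl) (fun i _ => hA _ (by omega) (by omega)) (by simp)).trans <|
      .head (step_pop rfl (hB (n + 1) (by omega) (by omega)) _) <|
      (reaches_pop (j := n + 2) (k := m) rfl (fun i _ => hB _ (by omega) (by omega)) _).tail
        (step_return (hC (n + 2 + m) (by omega) (by omega)))
  have secondPass :
      dppda.Reaches w ⟨.recount, [(.bottom, 0)], 1⟩ ⟨.accept, [], 3 * n + 1⟩ := by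
    refine (reaches_push (.inr rfl) (fun i _ => hA _ (by omega) (by omega)) (by simp)).trans <|
      (reaches_skip (fun i _ => hB _ (by omega) (by omega)) (by simp)).trans <|
      .head (step_pop rfl (hC (n + 1 + n) (by omega) (by omega)) _) <|
      (reaches_pop (j := n + 1 + n + 1) (k := m) rfl
        (fun i _ => hC _ (by omega) (by omega)) _).tail ?_
    rw [show n + 1 + n + 1 + m = 3 * n + 1 by omega]
    exact step_accept hEnd
  refine ⟨.accept, rfl, ?_⟩
  rw [show w.length + 1 = 3 * n + 1 by simp [w]; omega]
  exact firstPass.trans secondPass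

end AnBnCn

/-- There is a one-way deterministic pointer pushdown automaton
over a three-letter alphabet `{a, b, c}` (encoded as `Fin 3`, with `a = 0`,
`b = 1`, `c = 2`) recognizing exactly `{aⁿbⁿcⁿ | n ≥ 1}`. -/
theorem dppda_anbncn :
    ∃ (Q Γ : Type) (_ : Finite Q) (_ : Finite Γ) (M : DPPDA Q (Fin 3) Γ),
      M.OneWay ∧
      ∀ w : List (Fin 3), M.Accepts w ↔
        ∃ n : ℕ, 1 ≤ n ∧
          w = List.replicate n (0 : Fin 3) ++ List.replicate n (1 : Fin 3) ++
              List.replicate n (2 : Fin 3) := by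
  refine ⟨AnBnCn.State, AnBnCn.Sym, inferInstance, inferInstance, AnBnCn.dppda,
    AnBnCn.dppda_oneWay, fun w => ⟨AnBnCn.exists_eq_of_accepts, ?_⟩⟩
  rintro ⟨n, hn, rfl⟩
  obtain ⟨m, rfl⟩ := Nat.exists_eq_add_of_le' hn
  exact AnBnCn.accepts_replicate m
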